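/- arXiv:2101.12585 — 3 statements merged into one kernel-verified Lean document; each statement's English description precedes it below -/
import Mathlib

section
/- Every quadratic form φ ∈ I²F of dimension d is Witt equivalent to a sum of at most d/2 − 1 forms similar to 2-fold Pfister forms. -/
/-!
The two invariants dimension mod 2 and signed discriminant vanish on hyperbolic forms and on
forms similar to 2-fold Pfister forms, so a form `φ ∈ I²F` has even dimension `2m` and
`(-1)ᵐ det φ` is a square. Conversely, for such `φ = ⟨c, b, b', …⟩` the Witt ring identity
`⟨c, b, b'⟩ = c⟪-cb', -cb⟫ + ⟨-cbb'⟩` replaces `φ` by a form two dimensions shorter with the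
same invariants, at the cost of one form in `GP₂F`. After `m - 1` steps a binary form of
discriminant `-1` is left, and it is hyperbolic.
-/

namespace PN

variable (F : Type*) [Field F]

/-- The diagonal quadratic form with diagonal entries given by a list. -/
noncomputable def qf (l : List F) : QuadraticForm F (Fin l.length → F) :=
  QuadraticMap.weightedSumSquares F l.get

/-- Isometry of diagonal quadratic forms. -/
def Isom (l l' : List F) : Prop :=
  Nonempty (QuadraticMap.IsometryEquiv (qf F l) (qf F l'))

/-- Diagonalization of the sum of `k` hyperbolic planes. -/
def hypList (k : ℕ) : List F :=
  List.replicate k (1 : F) ++ List.replicate k (-1 : F)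

/-- A (diagonalized) form is hyperbolic if it is isometric to a sum of hyperbolic planes. -/
def IsHyp (l : List F) : Prop := ∃ k : ℕ, Isom F l (hypList F k)

def negList (l : List F) : List F := l.map (fun x => -x)

/-- Witt equivalence of diagonalized quadratic forms. -/
def WittEquiv (l l' : List F) : Prop := IsHyp F (l ++ negList F l')

/-- Nondegeneracy: all diagonal entries are nonzero. -/
def Nondeg (l : List F) : Prop := ∀ x ∈ l, x ≠ 0

/-- Diagonalization of the Pfister form `⟪a₁,…,aₙ⟫ = ⟨1,-a₁⟩⊗⋯⊗⟨1,-aₙ⟩`. -/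
def pfister : List F → List F
  | [] => [1]
  | a :: l => pfister l ++ (pfister l).map (fun x => -a * x)

/-- `l` is a diagonalization of an `n`-fold Pfister form. -/
def IsPfister (n : ℕ) (l : List F) : Prop :=
  ∃ a : Fin n → F, (∀ i, a i ≠ 0) ∧ l = pfister F (List.ofFn a)

/-- `l` is a diagonalization of a form similar to an `n`-fold Pfister form. -/
def IsGP (n : ℕ) (l : List F) : Prop :=
  ∃ c : F, c ≠ 0 ∧ ∃ p : List F, IsPfister F n p ∧ l = p.map (fun x => c * x)

/-- The Witt class of `l` lies in `IⁿF`, i.e. it is a sum of classes of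
forms similar to `n`-fold Pfister forms. -/
def InI (n : ℕ) (l : List F) : Prop :=
  ∃ L : List (List F), (∀ p ∈ L, IsGP F n p) ∧ WittEquiv F l L.flatten

/-- The (scaled) `n`-Pfister number of `l` (`⊤` if the Witt class of `l` is not in `IⁿF`). -/
noncomputable def GPnum (n : ℕ) (l : List F) : ℕ∞ :=
  sInf {k : ℕ∞ | ∃ L : List (List F), (L.length : ℕ∞) = k ∧
    (∀ p ∈ L, IsGP F n p) ∧ WittEquiv F l L.flatten}

/-- The unscaled `n`-Pfister number: least number of genuine `n`-fold Pfister
forms with signs `±1` whose Witt classes sum to that of `l`. -/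
noncomputable def Pnum (n : ℕ) (l : List F) : ℕ∞ :=
  sInf {k : ℕ∞ | ∃ L : List (List F), (L.length : ℕ∞) = k ∧
    (∀ p ∈ L, IsPfister F n p ∨ ∃ q : List F, IsPfister F n q ∧ p = negList F q) ∧
    WittEquiv F l L.flatten}

/-- `GP_n(F, d)`: the supremum of `n`-Pfister numbers of forms in `IⁿF` of dimension `≤ d`. -/
noncomputable def GPsup (n : ℕ) (d : ℕ) : ℕ∞ :=
  ⨆ l ∈ {l : List F | Nondeg F l ∧ InI F n l ∧ l.length ≤ d}, GPnum F n l

/-- `a` is a nonzero value represented by the form `l`. -/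
def Represents (l : List F) (a : F) : Prop := a ≠ 0 ∧ ∃ x, qf F l x = a

/-- The set of nonzero represented values. -/
def D (l : List F) : Set F := {a | Represents F l a}

def Anisotropic (l : List F) : Prop := (qf F l).Anisotropic

def SameSquareClass (a b : F) : Prop := ∃ c : F, c ≠ 0 ∧ a = b * c ^ 2

/-- A field is rigid if every anisotropic binary form represents at most two square classes. -/
def Rigid : Prop := ∀ x y : F, x ≠ 0 → y ≠ 0 → Anisotropic F [x, y] →
  ∃ u v : F, ∀ a : F, Represents F [x, y] a →
    SameSquareClass F a u ∨ SameSquareClass F a v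

/-- The level `s(F)`: the least `n` such that `-1` is a sum of `n` squares (`⊤` if none). -/
noncomputable def level : ℕ∞ :=
  sInf {m : ℕ∞ | ∃ n : ℕ, m = (n : ℕ∞) ∧ ∃ f : Fin n → F, (-1 : F) = ∑ i, f i ^ 2}

/-- `l` is (isometric to) a subform of `l'`. -/
def Subform (l l' : List F) : Prop := ∃ r : List F, Isom F l' (l ++ r)

end PN

namespace PN

variable {F : Type*} [Field F]

open QuadraticMap

theorem Isom.refl (l : List F) : Isom F l l := ⟨.refl _⟩

theorem Isom.trans {l₁ l₂ l₃ : List F} (h : Isom F l₁ l₂) (h' : Isom F l₂ l₃) :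
    Isom F l₁ l₃ :=
  h.elim fun e => h'.elim fun e' => ⟨e.trans e'⟩

theorem Isom.length_eq {l l' : List F} (h : Isom F l l') : l.length = l'.length := by
  obtain ⟨e⟩ := h
  simpa using e.toLinearEquiv.finrank_eq

theorem isom_of_equiv {l l' : List F} (e : Fin l'.length ≃ Fin l.length)
    (u : Fin l'.length → F) (hu : ∀ i, u i ≠ 0)
    (h : ∀ i, l.get (e i) = l'.get i * u i ^ 2) : Isom F l l' := by
  refine ⟨⟨⟨⟨⟨fun x i => u i * x (e i), ?_⟩, ?_⟩,
      fun y j => (u (e.symm j))⁻¹ * y (e.symm j), ?_, ?_⟩, ?_⟩⟩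
  · intro x y; funext i; simp [mul_add]
  · intro c x; funext i; simp only [Pi.smul_apply, smul_eq_mul, RingHom.id_apply]; ring
  · intro x; funext j
    simp [inv_mul_cancel_left₀ (hu _)]
  · intro y; funext i
    simp [mul_inv_cancel_left₀ (hu _)]
  · intro x
    change qf F l' (fun i => u i * x (e i)) = qf F l x
    simp only [qf, weightedSumSquares_apply, smul_eq_mul]
    rw [← Equiv.sum_comp e]
    refine Finset.sum_congr rfl fun i _ => ?_
    rw [h i]; ring

theorem isom_of_forall₂ {l l' : List F} (h : List.Forall₂ (SameSquareClass F) l l') :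
    Isom F l l' := by
  obtain ⟨hlen, hget⟩ := List.forall₂_iff_get.mp h
  choose u hu hlu using fun i : Fin l'.length => hget i (by omega) i.isLt
  exact isom_of_equiv (finCongr hlen.symm) u hu hlu

theorem isometryEquiv_append_prod (l₁ l₂ : List F) :
    Nonempty ((qf F (l₁ ++ l₂)).IsometryEquiv ((qf F l₁).prod (qf F l₂))) := by
  let e : Fin (l₁ ++ l₂).length ≃ Fin l₁.length ⊕ Fin l₂.length :=
    (finCongr List.length_append).trans finSumFinEquiv.symm
  refine ⟨⟨(LinearEquiv.funCongrLeft F F e.symm).trans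
      (LinearEquiv.sumArrowLequivProdArrow _ _ F F), fun x => ?_⟩⟩
  change qf F l₁ (fun a => x (e.symm (.inl a))) + qf F l₂ (fun b => x (e.symm (.inr b)))
      = qf F (l₁ ++ l₂) x
  simp only [qf, weightedSumSquares_apply]
  rw [← e.symm.sum_comp, Fintype.sum_sum_type]
  simp [e, List.getElem_append_left, List.getElem_append_right]

theorem Isom.append {l₁ l₂ l₁' l₂' : List F} (h₁ : Isom F l₁ l₁') (h₂ : Isom F l₂ l₂') :
    Isom F (l₁ ++ l₂) (l₁' ++ l₂') := by
  obtain ⟨E⟩ := isometryEquiv_append_prod l₁ l₂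
  obtain ⟨E'⟩ := isometryEquiv_append_prod l₁' l₂'
  obtain ⟨e₁⟩ := h₁
  obtain ⟨e₂⟩ := h₂
  exact ⟨(E.trans (e₁.prod e₂)).trans E'.symm⟩

theorem isom_of_perm {l l' : List F} (h : l.Perm l') : Isom F l l' := by
  induction h with
  | nil => exact .refl _
  | cons x _ ih => exact (Isom.refl [x]).append ih
  | swap x y l =>
    refine Isom.append (l₁ := [y, x]) (l₁' := [x, y]) ?_ (.refl l)
    refine isom_of_equiv (Equiv.swap 0 1) 1 (fun _ => one_ne_zero) fun i => ?_
    fin_cases i <;> simp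
  | trans _ _ ih₁ ih₂ => exact ih₁.trans ih₂

theorem isom_hyperbolicPlane (h2 : (2 : F) ≠ 0) {x : F} (hx : x ≠ 0) :
    Isom F [x, -x] [1, -1] := by
  -- `A (u, v) = (p, q)` with `p - q = u - v` and `p + q = x (u + v)`, so `p² - q² = x (u² - v²)`.
  let A : Matrix (Fin 2) (Fin 2) F := !![(x + 1) / 2, (x - 1) / 2; (x - 1) / 2, (x + 1) / 2]
  have hA : A.det = x := by
    simp only [A, Matrix.det_fin_two_of]
    field_simp
    ring
  refine ⟨⟨A.toLinearEquiv (Pi.basisFun F (Fin 2)) (hA ▸ hx.isUnit), fun v => ?_⟩⟩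
  simp [qf, weightedSumSquares_apply, Fin.sum_univ_two, A, Matrix.toLin_eq_toLin', dotProduct]
  field_simp
  ring

theorem IsHyp.of_isom {l l' : List F} (h : Isom F l l') (h' : IsHyp F l') : IsHyp F l :=
  h'.imp fun _ => h.trans

theorem isHyp_nil : IsHyp F [] := ⟨0, .refl _⟩

theorem IsHyp.append {s t : List F} (hs : IsHyp F s) (ht : IsHyp F t) : IsHyp F (s ++ t) := by
  obtain ⟨a, ha⟩ := hs
  obtain ⟨b, hb⟩ := ht
  refine ⟨a + b, (ha.append hb).trans (isom_of_perm ?_)⟩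
  simp only [hypList, List.replicate_add, List.append_assoc]
  exact (List.perm_append_comm_assoc _ _ _).append_left _

theorem isHyp_pair (h2 : (2 : F) ≠ 0) {x y : F} (hx : x ≠ 0) (hy : y ≠ 0)
    (hxy : IsSquare (-(x * y))) : IsHyp F [x, y] := by
  obtain ⟨e, he⟩ := hxy
  have hy' : SameSquareClass F y (-x) := by
    refine ⟨e / x, div_ne_zero ?_ hx, ?_⟩
    · rintro rfl
      simp_all
    · field_simp
      linear_combination -he
  refine ⟨1, (isom_of_forall₂ ?_).trans (isom_hyperbolicPlane h2 hx)⟩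
  exact .cons ⟨1, one_ne_zero, by ring⟩ (.cons hy' .nil)

theorem isHyp_append_negList (h2 : (2 : F) ≠ 0) {l : List F} (hl : Nondeg F l) :
    IsHyp F (l ++ negList F l) := by
  induction l with
  | nil => exact isHyp_nil
  | cons x l ih =>
    have hx : x ≠ 0 := hl x List.mem_cons_self
    have hpair : IsHyp F [x, -x] := isHyp_pair h2 hx (neg_ne_zero.2 hx) ⟨x, by ring⟩
    refine IsHyp.of_isom (isom_of_perm (List.perm_middle.cons x)) ?_
    exact hpair.append (ih fun y hy => hl y (List.mem_cons_of_mem x hy))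

theorem toMatrix'_weightedSumSquares {R ι : Type*} [CommRing R] [Invertible (2 : R)]
    [Fintype ι] [DecidableEq ι] (w : ι → R) :
    QuadraticForm.toMatrix' (weightedSumSquares R w) = Matrix.diagonal w := by
  ext i j
  simp only [QuadraticForm.toMatrix', LinearMap.toMatrix₂'_apply, associated_apply,
    weightedSumSquares_apply, Pi.add_apply, Pi.single_apply, smul_eq_mul, mul_ite, mul_one,
    mul_zero, Finset.sum_ite_eq', Finset.mem_univ, ↓reduceIte, Module.End.smul_def,
    half_moduleEnd_apply_eq_half_smul, Matrix.diagonal_apply]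
  split_ifs with hij
  · subst hij
    simp only [← two_mul, mul_ite, mul_one, mul_zero, Finset.sum_ite_eq', Finset.mem_univ,
      ↓reduceIte]
    linear_combination w i * invOf_mul_self (2 : R)
  · simp [mul_add, mul_ite, Finset.sum_add_distrib, Finset.sum_ite_eq', hij, Ne.symm hij]

theorem isSquare_prod_mul_prod_of_isometryEquiv [Invertible (2 : F)] {n m : ℕ}
    {w : Fin n → F} {w' : Fin m → F}
    (e : (weightedSumSquares F w).IsometryEquiv (weightedSumSquares F w')) :
    IsSquare ((∏ i, w i) * ∏ i, w' i) := by
  obtain rfl : n = m := by simpa using e.toLinearEquiv.finrank_eq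
  have hcomp : weightedSumSquares F w = (weightedSumSquares F w').comp e.toLinearMap := by
    ext x; exact (e.map_app x).symm
  have hdiscr := congrArg QuadraticForm.discr' hcomp
  rw [QuadraticForm.discr'_comp] at hdiscr
  simp only [QuadraticForm.discr', toMatrix'_weightedSumSquares, Matrix.det_diagonal] at hdiscr
  rw [hdiscr]
  exact ⟨_ * ∏ i, w' i, by ring⟩

theorem Isom.isSquare_prod_mul_prod (h2 : (2 : F) ≠ 0) {l l' : List F} (h : Isom F l l') :
    IsSquare (l.prod * l'.prod) := by
  have := invertibleOfNonzero h2
  obtain ⟨e⟩ := h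
  simpa [Fin.prod_univ_getElem] using isSquare_prod_mul_prod_of_isometryEquiv e

theorem isGP_two {c a b : F} (hc : c ≠ 0) (ha : a ≠ 0) (hb : b ≠ 0) :
    IsGP F 2 ((pfister F [a, b]).map (c * ·)) :=
  ⟨c, hc, _, ⟨![a, b], fun i => by fin_cases i <;> assumption, rfl⟩, rfl⟩

theorem IsGP.length_eq_four {p : List F} (h : IsGP F 2 p) : p.length = 4 := by
  obtain ⟨c, -, q, ⟨a, -, rfl⟩, rfl⟩ := h
  simp [pfister]

theorem IsGP.prod_eq_sq {p : List F} (h : IsGP F 2 p) : ∃ u, u ≠ 0 ∧ p.prod = u ^ 2 := by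
  obtain ⟨c, hc, q, ⟨a, ha, rfl⟩, rfl⟩ := h
  refine ⟨c ^ 2 * (a 0 * a 1), by simp [hc, ha], ?_⟩
  simp only [pfister, List.ofFn_succ, List.ofFn_zero, Fin.succ_zero_eq_one, List.map_cons,
    List.map_nil, List.cons_append, List.nil_append, List.prod_cons, List.prod_nil]
  ring

theorem length_flatten_of_isGP {L : List (List F)} (h : ∀ p ∈ L, IsGP F 2 p) :
    L.flatten.length = 4 * L.length := by
  rw [List.length_flatten, List.map_congr_left fun p hp => (h p hp).length_eq_four]
  simp [mul_comm]

theorem prod_flatten_eq_sq_of_isGP {L : List (List F)} (h : ∀ p ∈ L, IsGP F 2 p) :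
    ∃ u, u ≠ 0 ∧ L.flatten.prod = u ^ 2 := by
  induction L with
  | nil => exact ⟨1, one_ne_zero, by simp⟩
  | cons p L ih =>
    obtain ⟨u, hu, hL⟩ := ih fun q hq => h q (List.mem_cons_of_mem p hq)
    obtain ⟨v, hv, hp⟩ := (h p List.mem_cons_self).prod_eq_sq
    exact ⟨v * u, mul_ne_zero hv hu, by rw [List.flatten_cons, List.prod_append, hp, hL]; ring⟩

theorem prod_negList (l : List F) : (negList F l).prod = (-1) ^ l.length * l.prod :=
  List.prod_map_neg l

theorem InI.exists_length_eq_isSquare (h2 : (2 : F) ≠ 0) {φ : List F} (hI : InI F 2 φ) :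
    ∃ m, φ.length = 2 * m ∧ IsSquare ((-1) ^ m * φ.prod) := by
  obtain ⟨L, hL, k, hiso⟩ := hI
  have hlen := hiso.length_eq
  simp only [List.length_append, negList, List.length_map, length_flatten_of_isGP hL, hypList,
    List.length_replicate] at hlen
  obtain ⟨u, hu, hprod⟩ := prod_flatten_eq_sq_of_isGP hL
  have hsq := hiso.isSquare_prod_mul_prod h2
  simp only [List.prod_append, prod_negList, hprod, length_flatten_of_isGP hL, hypList,
    List.prod_replicate, one_pow, one_mul] at hsq
  obtain ⟨m, rfl⟩ : ∃ m, k = m + 2 * L.length := ⟨k - 2 * L.length, by omega⟩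
  refine ⟨m, by omega, ?_⟩
  have hsign : ∀ j, (-1 : F) ^ (2 * j) = 1 := fun j => (even_two_mul j).neg_one_pow
  rw [pow_add, hsign, show 4 * L.length = 2 * (2 * L.length) by ring, hsign] at hsq
  have := hsq.div (IsSquare.sq u)
  rwa [show φ.prod * (1 * u ^ 2) * ((-1) ^ m * 1) = (-1) ^ m * φ.prod * u ^ 2 by ring,
    mul_div_cancel_right₀ _ (pow_ne_zero 2 hu)] at this

theorem WittEquiv.cons_cons_cons (h2 : (2 : F) ≠ 0) {c b b' : F} (hc : c ≠ 0) (hb : b ≠ 0)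
    (hb' : b' ≠ 0) {r M : List F} (h : WittEquiv F (-(c * b * b') :: r) M) :
    WittEquiv F (c :: b :: b' :: r) ((pfister F [-(c * b'), -(c * b)]).map (c * ·) ++ M) := by
  have hτ : List.Forall₂ (SameSquareClass F)
      (negList F ((pfister F [-(c * b'), -(c * b)]).map (c * ·))) [-c, -b, -b', -(c * b * b')] := by
    simp only [negList, pfister, List.map_cons, List.map_nil, List.cons_append, List.nil_append]
    refine .cons ⟨1, one_ne_zero, by ring⟩ (.cons ⟨c, hc, by ring⟩ (.cons ⟨c, hc, by ring⟩
      (.cons ⟨c, hc, by ring⟩ .nil)))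
  have hbc : Nondeg F [c, b, b'] := by simp [Nondeg, hc, hb, hb']
  rw [WittEquiv, negList, List.map_append, ← negList, ← negList]
  refine IsHyp.of_isom ((Isom.refl _).append ((isom_of_forall₂ hτ).append (.refl _))) ?_
  refine IsHyp.of_isom (isom_of_perm ?_) ((isHyp_append_negList h2 hbc).append h)
  exact (((List.perm_append_comm_assoc r [_, _, _, _] _).cons _).cons _).cons _

theorem GPnum_le_length {n : ℕ} {l : List F} {L : List (List F)} (hL : ∀ p ∈ L, IsGP F n p)
    (h : WittEquiv F l L.flatten) : GPnum F n l ≤ L.length :=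
  sInf_le ⟨L, rfl, hL, h⟩

theorem exists_isGP_wittEquiv_of_isSquare (h2 : (2 : F) ≠ 0) (m : ℕ) {l : List F}
    (hl : Nondeg F l) (hlen : l.length = 2 * (m + 1)) (hsq : IsSquare ((-1) ^ (m + 1) * l.prod)) :
    ∃ L : List (List F), L.length = m ∧ (∀ p ∈ L, IsGP F 2 p) ∧ WittEquiv F l L.flatten := by
  induction m generalizing l with
  | zero =>
    obtain ⟨c, b, rfl⟩ := List.length_eq_two.1 hlen
    refine ⟨[], rfl, by simp, ?_⟩
    exact isHyp_pair h2 (hl c (by simp)) (hl b (by simp)) (by simpa using hsq)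
  | succ m ih =>
    obtain ⟨c, b, b', r, rfl⟩ : ∃ c b b' r, l = c :: b :: b' :: r := by
      match l, hlen with
      | c :: b :: b' :: r, _ => exact ⟨c, b, b', r, rfl⟩
    have hc : c ≠ 0 := hl c (by simp)
    have hb : b ≠ 0 := hl b (by simp)
    have hb' : b' ≠ 0 := hl b' (by simp)
    obtain ⟨L, hL, hGP, hW⟩ := ih (l := -(c * b * b') :: r) (by simp_all [Nondeg])
      (by simp only [List.length_cons] at hlen ⊢; omega)
      (by convert hsq using 1; simp only [List.prod_cons]; ring)
    refine ⟨_ :: L, by simp [hL], ?_, hW.cons_cons_cons h2 hc hb hb'⟩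
    simp only [List.mem_cons, forall_eq_or_imp]
    exact ⟨isGP_two hc (by simp [hc, hb']) (by simp [hc, hb]), hGP⟩

end PN

theorem stmt_2 (F : Type*) [Field F] (hF : (2 : F) ≠ 0)
    (φ : List F) (hφ : PN.Nondeg F φ) (hI : PN.InI F 2 φ) :
    PN.GPnum F 2 φ ≤ ((φ.length / 2 - 1 : ℕ) : ℕ∞) := by
  obtain ⟨m, hlen, hsq⟩ := hI.exists_length_eq_isSquare hF
  rcases m with _ | m
  · rw [List.length_eq_zero_iff.1 hlen]
    exact (PN.GPnum_le_length (l := []) (L := []) (by simp) PN.isHyp_nil).trans (by simp)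
  · obtain ⟨L, hL, hGP, hW⟩ := PN.exists_isGP_wittEquiv_of_isSquare hF m hφ hlen hsq
    refine (PN.GPnum_le_length hGP hW).trans ?_
    rw [hL, hlen]
    norm_num
end

section
/- A formally real rigid field is pythagorean, i.e. every sum of two squares is a square. -/
section helpers

variable {F : Type*} [Field F]

lemma qf_pair (x y : F) (v : Fin 2 → F) :
    PN.qf F [x, y] v = x * v 0 ^ 2 + y * v 1 ^ 2 := by
  simp [PN.qf, Fin.sum_univ_two, smul_eq_mul, sq, mul_assoc]

lemma aniso_pair (x y : F) (h : ∀ p q : F, x * p ^ 2 + y * q ^ 2 = 0 → p = 0 ∧ q = 0) :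
    PN.Anisotropic F [x, y] := by
  intro v hv
  have hv' := qf_pair x y v
  rw [hv] at hv'
  obtain ⟨h0, h1⟩ := h _ _ hv'.symm
  funext i
  obtain ⟨i, hi⟩ := i
  simp only [List.length] at hi
  interval_cases i
  · exact h0
  · exact h1

lemma rep_pair (x y a : F) (ha : a ≠ 0) (p q : F) (hpq : x * p ^ 2 + y * q ^ 2 = a) :
    PN.Represents F [x, y] a :=
  ⟨ha, ![p, q], by rw [qf_pair]; simpa using hpq⟩

lemma ssc_trans {a b w : F} (ha : a ≠ 0) (h1 : PN.SameSquareClass F a w)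
    (h2 : PN.SameSquareClass F b w) : PN.SameSquareClass F a b := by
  obtain ⟨c, hc, rfl⟩ := h1
  obtain ⟨d, hd, rfl⟩ := h2
  have hw : w ≠ 0 := fun h => ha (by simp [h])
  exact ⟨c / d, div_ne_zero hc hd, by field_simp⟩

end helpers

theorem stmt_9 (F : Type*) [Field F] (hF : (2 : F) ≠ 0)
    (hrigid : PN.Rigid F)
    (hreal : ∀ (n : ℕ) (f : Fin n → F), (-1 : F) ≠ ∑ i, f i ^ 2) :
    ∀ a b : F, ∃ c : F, a ^ 2 + b ^ 2 = c ^ 2 := by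
  have hsq1 : ∀ c : F, (-1 : F) ≠ c ^ 2 := by
    intro c hc
    exact hreal 1 (fun _ => c) (by simpa using hc)
  have hsq2 : ∀ c d : F, (-1 : F) ≠ c ^ 2 + d ^ 2 := by
    intro c d hc
    exact hreal 2 ![c, d] (by simpa [Fin.sum_univ_two] using hc)
  have key : ∀ t : F, ∃ d : F, 1 + t ^ 2 = d ^ 2 := by
    intro t
    by_cases ht : t = 0
    · exact ⟨1, by simp [ht]⟩
    set s : F := 1 + t ^ 2 with hs
    have hs0 : s ≠ 0 := by
      intro h
      exact hsq1 t (by linear_combination -h)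
    by_contra hns
    push_neg at hns
    have hnsq : ∀ d : F, s ≠ d ^ 2 := fun d h => hns d h
    have haniso : PN.Anisotropic F [(1 : F), -s] := by
      apply aniso_pair
      intro p q hpq
      by_cases hq : q = 0
      · refine ⟨?_, hq⟩
        have : p ^ 2 = 0 := by linear_combination hpq + s * q * hq
        exact pow_eq_zero_iff (two_ne_zero) |>.mp this
      · exfalso
        apply hnsq (p / q)
        field_simp
        linear_combination -hpq
    obtain ⟨u, v, huv⟩ := hrigid 1 (-s) one_ne_zero (neg_ne_zero.mpr hs0) haniso
    have rep1 : PN.Represents F [(1 : F), -s] 1 :=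
      rep_pair 1 (-s) 1 one_ne_zero 1 0 (by ring)
    have rep2 : PN.Represents F [(1 : F), -s] (-s) :=
      rep_pair 1 (-s) (-s) (neg_ne_zero.mpr hs0) 0 1 (by ring)
    have rep3 : PN.Represents F [(1 : F), -s] (-t ^ 2) :=
      rep_pair 1 (-s) (-t ^ 2) (by simpa using pow_ne_zero 2 ht) 1 1
        (by linear_combination -hs)
    have n12 : ¬ PN.SameSquareClass F (1 : F) (-s) := by
      rintro ⟨c, hc, hcc⟩
      apply hsq2 (1 / c) t
      field_simp
      linear_combination -hcc + c ^ 2 * hs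
    have n13 : ¬ PN.SameSquareClass F (1 : F) (-t ^ 2) := by
      rintro ⟨c, hc, hcc⟩
      apply hsq1 (1 / (t * c))
      field_simp
      linear_combination -hcc
    have n23 : ¬ PN.SameSquareClass F (-s) (-t ^ 2) := by
      rintro ⟨c, hc, hcc⟩
      exact hnsq (t * c) (by linear_combination -hcc)
    have h1 := huv 1 rep1
    have h2 := huv (-s) rep2
    have h3 := huv (-t ^ 2) rep3
    have e1 : (1 : F) ≠ 0 := one_ne_zero
    have e2 : (-s : F) ≠ 0 := neg_ne_zero.mpr hs0
    rcases h1 with c1 | c1 <;> rcases h2 with c2 | c2 <;> rcases h3 with c3 | c3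
    · exact n12 (ssc_trans e1 c1 c2)
    · exact n12 (ssc_trans e1 c1 c2)
    · exact n13 (ssc_trans e1 c1 c3)
    · exact n23 (ssc_trans e2 c2 c3)
    · exact n23 (ssc_trans e2 c2 c3)
    · exact n13 (ssc_trans e1 c1 c3)
    · exact n12 (ssc_trans e1 c1 c2)
    · exact n12 (ssc_trans e1 c1 c2)
  intro a b
  by_cases ha : a = 0
  · exact ⟨b, by simp [ha]⟩
  obtain ⟨d, hd⟩ := key (b / a)
  refine ⟨a * d, ?_⟩
  have h2 : a ^ 2 * (1 + (b / a) ^ 2) = a ^ 2 * d ^ 2 := by rw [hd]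
  field_simp at h2
  linear_combination h2
end

section
/- Let F be a rigid field of level s(F) ≠ 2, and let φ, ψ be quadratic forms over F such that φ ⊥ ψ is anisotropic. Then D_F(φ ⊥ ψ) = D_F(φ) ∪ D_F(ψ). -/
/-! Write a nonzero value of `φ ⊥ ψ` as `a = b + c` with `b = φ(x)`, `c = ψ(y)`; the case `b = 0`
or `c = 0` is trivial. Otherwise `⟨b, c⟩` is anisotropic and represents `a`, `b`, `c`, so by
rigidity two of them share a square class. If `a` shares it with `b` (or `c`), rescaling `x`
(or `y`) represents `a`. If `b = c e²`, anisotropy of `⟨b, c⟩` shows that `-1` is not a square,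
hence (as `s(F) ≠ 2`) not a sum of two squares; rigidity of `⟨1, -(1 + e²)⟩`, which represents
`1`, `-(1 + e²)` and `-e²`, then forces `1 + e² = w²`, and `a = c w²` is represented by `ψ`. -/

namespace PN

variable {F : Type*} [Field F]

theorem qf_pair_apply (b c : F) (v : Fin 2 → F) :
    qf F [b, c] v = b * v 0 ^ 2 + c * v 1 ^ 2 := by
  simp [qf, QuadraticMap.weightedSumSquares_apply, Fin.sum_univ_two, sq]

theorem represents_pair {a b c : F} (s t : F) (ha : a ≠ 0) (h : b * s ^ 2 + c * t ^ 2 = a) :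
    Represents F [b, c] a :=
  ⟨ha, ![s, t], by rw [qf_pair_apply]; simpa using h⟩

theorem anisotropic_pair_iff {b c : F} :
    Anisotropic F [b, c] ↔ ∀ s t : F, b * s ^ 2 + c * t ^ 2 = 0 → s = 0 ∧ t = 0 := by
  refine ⟨fun h s t hst => ?_, fun h v hv => ?_⟩
  · have := h ![s, t] (by rw [qf_pair_apply]; simpa using hst)
    exact ⟨congrFun this 0, congrFun this 1⟩
  · rw [qf_pair_apply] at hv
    obtain ⟨h0, h1⟩ := h _ _ hv
    exact funext (Fin.forall_fin_two.mpr ⟨h0, h1⟩)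

section

variable (φ ψ : List F)

def appendVec :
    (Fin φ.length → F) × (Fin ψ.length → F) ≃ (Fin (φ ++ ψ).length → F) :=
  (Fin.appendEquiv _ _).trans ((finCongr List.length_append.symm).arrowCongr (Equiv.refl F))

theorem qf_appendVec (x : Fin φ.length → F) (y : Fin ψ.length → F) :
    qf F (φ ++ ψ) (appendVec φ ψ (x, y)) = qf F φ x + qf F ψ y := by
  simp only [qf, QuadraticMap.weightedSumSquares_apply]
  rw [← (finCongr List.length_append.symm).sum_comp, Fin.sum_univ_add]
  congr 1 <;> refine Finset.sum_congr rfl fun i _ => ?_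
  · simp [appendVec, List.getElem_append_left]
  · simp [appendVec, List.getElem_append_right]

theorem appendVec_zero : appendVec φ ψ (0, 0) = 0 := by
  have h : Fin.append (0 : Fin φ.length → F) (0 : Fin ψ.length → F) = 0 :=
    funext fun j => Fin.addCases (fun j => by simp) (fun j => by simp) j
  funext i
  simp [appendVec, h]

variable {φ ψ}

theorem anisotropic_pair_of_anisotropic_append (han : Anisotropic F (φ ++ ψ))
    {x : Fin φ.length → F} {y : Fin ψ.length → F} (hx : x ≠ 0) (hy : y ≠ 0) :
    Anisotropic F [qf F φ x, qf F ψ y] := by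
  refine anisotropic_pair_iff.mpr fun s t hst => ?_
  have hzero : appendVec φ ψ (s • x, t • y) = appendVec φ ψ (0, 0) := by
    rw [appendVec_zero]
    apply han
    rw [qf_appendVec, QuadraticMap.map_smul, QuadraticMap.map_smul, smul_eq_mul, smul_eq_mul]
    linear_combination hst
  obtain ⟨hs, ht⟩ := Prod.ext_iff.mp ((appendVec φ ψ).injective hzero)
  exact ⟨(smul_eq_zero.mp hs).resolve_right hx, (smul_eq_zero.mp ht).resolve_right hy⟩

end

theorem SameSquareClass.symm {a b : F} (h : SameSquareClass F a b) : SameSquareClass F b a := by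
  obtain ⟨c, hc, rfl⟩ := h
  exact ⟨c⁻¹, inv_ne_zero hc, by field_simp⟩

theorem SameSquareClass.trans {a b c : F} (hab : SameSquareClass F a b)
    (hbc : SameSquareClass F b c) : SameSquareClass F a c := by
  obtain ⟨d, hd, rfl⟩ := hab
  obtain ⟨e, he, rfl⟩ := hbc
  exact ⟨e * d, mul_ne_zero he hd, by ring⟩

theorem mem_D_of_sameSquareClass {l : List F} {a : F} {x : Fin l.length → F} (ha : a ≠ 0)
    (h : SameSquareClass F a (qf F l x)) : a ∈ D F l := by
  obtain ⟨c, -, rfl⟩ := h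
  exact ⟨ha, c • x, by rw [QuadraticMap.map_smul, smul_eq_mul]; ring⟩

theorem Rigid.sameSquareClass_of_represents (hrigid : Rigid F) {b c : F} (hb : b ≠ 0)
    (hc : c ≠ 0) (han : Anisotropic F [b, c]) {x y z : F} (hx : Represents F [b, c] x)
    (hy : Represents F [b, c] y) (hz : Represents F [b, c] z) :
    SameSquareClass F x y ∨ SameSquareClass F x z ∨ SameSquareClass F y z := by
  obtain ⟨u, v, huv⟩ := hrigid b c hb hc han
  rcases huv x hx with hx | hx <;> rcases huv y hy with hy | hy <;>
    rcases huv z hz with hz | hz <;>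
    first
      | exact Or.inl (hx.trans hy.symm)
      | exact Or.inr (Or.inl (hx.trans hz.symm))
      | exact Or.inr (Or.inr (hy.trans hz.symm))

theorem Rigid.exists_sq_eq_one_add_sq (hrigid : Rigid F) (h2 : ∀ p q : F, p ^ 2 + q ^ 2 ≠ -1)
    (e : F) : ∃ w : F, 1 + e ^ 2 = w ^ 2 := by
  rcases eq_or_ne e 0 with rfl | he
  · exact ⟨1, by ring⟩
  by_contra! hns
  have hne : 1 + e ^ 2 ≠ 0 := fun h => h2 e 0 (by linear_combination h)
  have han : Anisotropic F [1, -(1 + e ^ 2)] := anisotropic_pair_iff.mpr fun s t hst => by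
    rcases eq_or_ne t 0 with rfl | ht
    · exact ⟨pow_eq_zero_iff two_ne_zero |>.mp (by linear_combination hst), rfl⟩
    · exact absurd (by field_simp; linear_combination -hst) (hns (s / t))
  rcases hrigid.sameSquareClass_of_represents one_ne_zero (neg_ne_zero.mpr hne) han
      (represents_pair 1 0 one_ne_zero (by ring))
      (represents_pair 0 1 (neg_ne_zero.mpr hne) (by ring))
      (represents_pair 1 1 (neg_ne_zero.mpr (pow_ne_zero 2 he)) (by ring))
    with ⟨d, -, h⟩ | ⟨d, -, h⟩ | ⟨d, -, h⟩
  · exact h2 d (e * d) (by linear_combination h)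
  · exact h2 (e * d) 0 (by linear_combination h)
  · exact hns (e * d) (by linear_combination -h)

theorem sq_ne_neg_one_of_anisotropic_pair {b c : F} (han : Anisotropic F [b, c])
    (hbc : SameSquareClass F b c) (i : F) : i ^ 2 ≠ -1 := by
  obtain ⟨e, -, rfl⟩ := hbc
  intro hi
  exact one_ne_zero (anisotropic_pair_iff.mp han 1 (e * i)
    (by linear_combination c * e ^ 2 * hi)).1

theorem level_eq_two {p q : F} (h1 : ∀ i : F, i ^ 2 ≠ -1) (h : p ^ 2 + q ^ 2 = -1) :
    level F = 2 := by
  refine le_antisymm (sInf_le ⟨2, rfl, ![p, q], by simp [Fin.sum_univ_two, h]⟩) ?_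
  refine le_sInf ?_
  rintro m ⟨n, rfl, f, hf⟩
  rcases n with _ | _ | n
  · simp at hf
  · exact absurd (by simpa using hf.symm) (h1 (f 0))
  · norm_cast
    omega

theorem mem_D_or_mem_D_of_add (hrigid : Rigid F) (hlevel : level F ≠ 2) {φ ψ : List F}
    (han : Anisotropic F (φ ++ ψ)) {x : Fin φ.length → F} {y : Fin ψ.length → F}
    (ha : qf F φ x + qf F ψ y ≠ 0) :
    qf F φ x + qf F ψ y ∈ D F φ ∨ qf F φ x + qf F ψ y ∈ D F ψ := by
  by_cases hb : qf F φ x = 0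
  · exact Or.inr ⟨ha, y, by simp [hb]⟩
  by_cases hc : qf F ψ y = 0
  · exact Or.inl ⟨ha, x, by simp [hc]⟩
  have hpair := anisotropic_pair_of_anisotropic_append han (x := x) (y := y)
    (by rintro rfl; simp at hb) (by rintro rfl; simp at hc)
  rcases hrigid.sameSquareClass_of_represents hb hc hpair (represents_pair 1 1 ha (by ring))
      (represents_pair 1 0 hb (by ring)) (represents_pair 0 1 hc (by ring))
    with hab | hac | hbc
  · exact Or.inl (mem_D_of_sameSquareClass ha hab)
  · exact Or.inr (mem_D_of_sameSquareClass ha hac)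
  have h2 (p q : F) : p ^ 2 + q ^ 2 ≠ -1 :=
    fun h => hlevel (level_eq_two (sq_ne_neg_one_of_anisotropic_pair hpair hbc) h)
  obtain ⟨e, -, he⟩ := hbc
  obtain ⟨w, hw⟩ := hrigid.exists_sq_eq_one_add_sq h2 e
  have hsum : qf F φ x + qf F ψ y = qf F ψ y * w ^ 2 := by
    linear_combination he + qf F ψ y * hw
  refine Or.inr (mem_D_of_sameSquareClass ha ⟨w, ?_, hsum⟩)
  rintro rfl
  exact ha (by simpa using hsum)

end PN

theorem stmt_11_general (F : Type*) [Field F]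
    (hrigid : PN.Rigid F) (hlevel : PN.level F ≠ 2)
    (φ ψ : List F)
    (han : PN.Anisotropic F (φ ++ ψ)) :
    PN.D F (φ ++ ψ) = PN.D F φ ∪ PN.D F ψ := by
  ext a
  constructor
  · rintro ⟨ha, z, rfl⟩
    obtain ⟨⟨x, y⟩, rfl⟩ := (PN.appendVec φ ψ).surjective z
    rw [PN.qf_appendVec] at ha ⊢
    exact PN.mem_D_or_mem_D_of_add hrigid hlevel han ha
  · rintro (⟨ha, x, rfl⟩ | ⟨ha, y, rfl⟩)
    · exact ⟨ha, PN.appendVec φ ψ (x, 0), by simp [PN.qf_appendVec]⟩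
    · exact ⟨ha, PN.appendVec φ ψ (0, y), by simp [PN.qf_appendVec]⟩

theorem stmt_11 (F : Type*) [Field F] (hF : (2 : F) ≠ 0)
    (hrigid : PN.Rigid F) (hlevel : PN.level F ≠ 2)
    (φ ψ : List F) (hφ : PN.Nondeg F φ) (hψ : PN.Nondeg F ψ)
    (han : PN.Anisotropic F (φ ++ ψ)) :
    PN.D F (φ ++ ψ) = PN.D F φ ∪ PN.D F ψ :=
  stmt_11_general F hrigid hlevel φ ψ han
end
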